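/- If a sequence (T_j) of tournaments with n_j = |V(T_j)| → ∞ satisfies (1/n_j²) · Σ_{(u,v) arc of T_j} |C(u,v)/(n_j − 2) − 1/4| → 0, then c_3(T_j)/binomial(n_j,3) → 1/4 as j → ∞, where c_3(T) is the number of 3-element subsets of V(T) inducing a cyclic triangle. -/

import Mathlib

/-! Summing `C(u,v)` over the arcs counts every cyclic triangle once for each of its three arcs,
and a tournament on `n` vertices has `n(n-1)/2` arcs. Hence
`c₃/binom(n,3) - 1/4 = 2/(n(n-1)) · Σ_{arcs} (C(u,v)/(n-2) - 1/4)`,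
which by the triangle inequality is at most `3/n²` times the summed deviations once `n ≥ 3`. -/

/-- A tournament on `n` vertices: an irreflexive relation such that for every
pair of distinct vertices exactly one direction holds. -/
structure Tournament (n : ℕ) where
  rel : Fin n → Fin n → Bool
  irrefl : ∀ v, rel v v = false
  total : ∀ u v, u ≠ v → rel u v = !rel v u

/-- The transitive tournament `Tr_k`. -/
def Tr (k : ℕ) : Tournament k where
  rel i j := decide (i < j)
  irrefl v := by simp
  total u v h := by
    rcases h.lt_or_gt with h' | h'
    · simp [h', h'.le]
    · simp [h', h'.le]

/-- The cyclic triangle. -/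
def C3 : Tournament 3 where
  rel := ![![false, true, false], ![false, false, true], ![true, false, false]]
  irrefl := by decide
  total := by decide

/-- `W₄`: the non-transitive tournament on 4 vertices with a "winner". -/
def W4 : Tournament 4 where
  rel := ![![false, true, true, true], ![false, false, true, false],
           ![false, false, false, true], ![false, true, false, false]]
  irrefl := by decide
  total := by decide

/-- `L₄`: the non-transitive tournament on 4 vertices with a "loser". -/
def L4 : Tournament 4 where
  rel := ![![false, true, false, true], ![false, false, true, true],
           ![true, false, false, true], ![false, false, false, false]]
  irrefl := by decide
  total := by decide

/-- `R₄`: the tournament on 4 vertices with out-degree sequence (1,1,2,2). -/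
def R4 : Tournament 4 where
  rel := ![![false, true, true, false], ![false, false, true, true],
           ![false, false, false, true], ![true, false, false, false]]
  irrefl := by decide
  total := by decide

/-- Two tournaments on the same number of vertices are isomorphic if some
permutation of the vertices carries one arc relation to the other. -/
def Isomorphic {k : ℕ} (S T : Tournament k) : Prop :=
  ∃ e : Equiv.Perm (Fin k), ∀ i j, S.rel i j = T.rel (e i) (e j)

/-- The subtournament of `T` induced on the subset `A` is isomorphic to `S`. -/
def IsoOn {k n : ℕ} (S : Tournament k) (T : Tournament n) (A : Finset (Fin n)) : Prop :=
  ∃ f : Fin k → Fin n, Function.Injective f ∧ Finset.univ.image f = A ∧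
    ∀ i j, S.rel i j = T.rel (f i) (f j)

open scoped Classical in
/-- The number of `k`-element subsets of the vertex set of `T` whose induced
subtournament is isomorphic to `S` (where `S` has `k` vertices). -/
noncomputable def copyCount {k n : ℕ} (S : Tournament k) (T : Tournament n) : ℕ :=
  ((Finset.powersetCard k (Finset.univ : Finset (Fin n))).filter (IsoOn S T)).card

/-- The (unlabelled) density `p(S, T)`. -/
noncomputable def density {k n : ℕ} (S : Tournament k) (T : Tournament n) : ℝ :=
  (copyCount S T : ℝ) / (n.choose k : ℝ)

/-- The number of automorphisms of a tournament. -/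
def autCount {k : ℕ} (S : Tournament k) : ℕ :=
  (Finset.univ.filter
    (fun e : Equiv.Perm (Fin k) => ∀ i j, S.rel i j = S.rel (e i) (e j))).card

/-- A sequence of tournaments with growing vertex sets is quasi-random if every
fixed tournament `S` on `k` vertices appears with density tending to
`k! / (|Aut S| * 2^(k(k-1)/2))`. -/
def QuasiRandom {nn : ℕ → ℕ} (T : ∀ j, Tournament (nn j)) : Prop :=
  ∀ (k : ℕ) (S : Tournament k),
    Filter.Tendsto (fun j => density S (T j)) Filter.atTop
      (nhds ((k.factorial : ℝ) / ((autCount S : ℝ) * 2 ^ (k * (k - 1) / 2))))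

/-- `D(u,v) = #{w : u→w ∧ w→v}`. -/
def Dcount {n : ℕ} (T : Tournament n) (u v : Fin n) : ℕ :=
  (Finset.univ.filter (fun w => T.rel u w ∧ T.rel w v)).card

/-- `C(u,v) = #{w : v→w ∧ w→u}`. -/
def Ccount {n : ℕ} (T : Tournament n) (u v : Fin n) : ℕ :=
  (Finset.univ.filter (fun w => T.rel v w ∧ T.rel w u)).card

/-- `I(u,v) = #{w : w→u ∧ w→v}`. -/
def Icount {n : ℕ} (T : Tournament n) (u v : Fin n) : ℕ :=
  (Finset.univ.filter (fun w => T.rel w u ∧ T.rel w v)).card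

/-- `O(u,v) = #{w : u→w ∧ v→w}`. -/
def Ocount {n : ℕ} (T : Tournament n) (u v : Fin n) : ℕ :=
  (Finset.univ.filter (fun w => T.rel u w ∧ T.rel v w)).card

/-- The subset `A` induces a transitive subtournament of `T`. -/
def IsTransOn {n : ℕ} (T : Tournament n) (A : Finset (Fin n)) : Prop :=
  ∀ u ∈ A, ∀ v ∈ A, ∀ w ∈ A, T.rel u v → T.rel v w → T.rel u w

open scoped Classical in
/-- `tr_m(T)`: the number of `m`-element subsets of the vertex set of `T`
inducing a transitive subtournament. -/
noncomputable def trCount (m : ℕ) {n : ℕ} (T : Tournament n) : ℕ :=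
  ((Finset.powersetCard m (Finset.univ : Finset (Fin n))).filter (IsTransOn T)).card

/-- The subtournament of `T` induced on a subset `A` of its vertices. -/
noncomputable def induce {n : ℕ} (T : Tournament n) (A : Finset (Fin n)) :
    Tournament A.card where
  rel i j := T.rel (A.orderIsoOfFin rfl i) (A.orderIsoOfFin rfl j)
  irrefl i := T.irrefl _
  total i j h := T.total _ _ (fun hc => h ((A.orderIsoOfFin rfl).injective (Subtype.ext hc)))

/-- The out-neighbourhood `N⁺(u)` of a vertex. -/
def outSet {n : ℕ} (T : Tournament n) (u : Fin n) : Finset (Fin n) :=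
  Finset.univ.filter (fun w => T.rel u w)

/-- The out-degree of a vertex. -/
def outDeg {n : ℕ} (T : Tournament n) (v : Fin n) : ℕ :=
  (Finset.univ.filter (fun w => T.rel v w)).card

/-- The multiset of out-degrees of a tournament. -/
def outDegs {n : ℕ} (T : Tournament n) : Multiset ℕ :=
  Finset.univ.val.map (outDeg T)

/-- The arc relation of `T` is transitive. -/
def IsTransitiveT {k : ℕ} (S : Tournament k) : Prop :=
  ∀ u v w, S.rel u v → S.rel v w → S.rel u w

open Finset

lemma Nat.cast_choose_three {K : Type*} [Field K] [CharZero K] (n : ℕ) :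
    (n.choose 3 : K) = n * (n - 1) * (n - 2) / 6 := by
  rcases lt_or_ge n 2 with hn | hn
  · interval_cases n <;> simp [Nat.choose]
  · have h := congrArg (Nat.cast : ℕ → K) (Nat.choose_succ_right_eq n 2)
    push_cast [Nat.cast_sub hn, Nat.cast_choose_two] at h
    linear_combination h / 3

namespace Tournament

variable {n : ℕ} (T : Tournament n)

lemma ne_of_rel {u v : Fin n} (h : T.rel u v) : u ≠ v := by
  rintro rfl
  simp [T.irrefl] at h

lemma rel_asymm {u v : Fin n} (h : T.rel u v) : T.rel v u = false := by
  simpa [h] using T.total v u (T.ne_of_rel h).symm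

def arcs : Finset (Fin n × Fin n) := {p | T.rel p.1 p.2}

lemma card_arcs : #T.arcs = n.choose 2 := by
  set u := T.arcs
  set v := T.arcs.map (Equiv.prodComm _ _).toEmbedding
  have disj : Disjoint u v := by
    simp only [u, v, disjoint_left, arcs, mem_map, mem_filter, mem_univ, true_and]
    rintro p hp ⟨q, hq, rfl⟩
    simp [T.rel_asymm hq] at hp
  have union : u.disjUnion v disj = (univ : Finset (Fin n)).offDiag := by
    ext ⟨a, b⟩
    simp only [u, v, arcs, mem_disjUnion, mem_map, mem_filter, mem_univ, true_and, mem_offDiag]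
    constructor
    · rintro (h | ⟨⟨c, d⟩, h, hcd⟩)
      · exact T.ne_of_rel h
      · simp only [Equiv.coe_toEmbedding, Equiv.prodComm_apply, Prod.swap_prod_mk,
          Prod.mk.injEq] at hcd
        obtain ⟨rfl, rfl⟩ := hcd
        exact (T.ne_of_rel h).symm
    · intro hab
      cases hba : T.rel b a
      · exact Or.inl (by simpa [hba] using T.total a b hab)
      · exact Or.inr ⟨(b, a), hba, rfl⟩
  have swap : #u = #v := (card_map _).symm
  grind [Nat.mul_sub_one, offDiag_card, Nat.choose_two_right, card_univ, Fintype.card_fin]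

lemma sum_arcs {M : Type*} [AddCommMonoid M] (f : Fin n × Fin n → M) :
    ∑ p ∈ T.arcs, f p = ∑ u, ∑ v, if T.rel u v then f (u, v) else 0 := by
  rw [arcs, sum_filter, Fintype.sum_prod_type]

def cyclicTriples : Finset (Fin n × Fin n × Fin n) :=
  {t | T.rel t.1 t.2.1 ∧ T.rel t.2.1 t.2.2 ∧ T.rel t.2.2 t.1}

lemma sum_arcs_Ccount : ∑ p ∈ T.arcs, Ccount T p.1 p.2 = #T.cyclicTriples := by
  rw [sum_arcs, cyclicTriples, card_filter, Fintype.sum_prod_type]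
  refine sum_congr rfl fun u _ => ?_
  rw [Fintype.sum_prod_type]
  refine sum_congr rfl fun v _ => ?_
  by_cases h : T.rel u v
  · simp only [h, if_true, true_and, Ccount, card_filter]
  · simp [h]

lemma isoOn_C3_of_cyclic {a b c : Fin n} (hab : T.rel a b) (hbc : T.rel b c) (hca : T.rel c a) :
    IsoOn C3 T {a, b, c} := by
  have := T.ne_of_rel hab
  have := T.ne_of_rel hbc
  have := T.ne_of_rel hca
  refine ⟨![a, b, c], ?_, ?_, ?_⟩
  · intro i j hij
    fin_cases i <;> fin_cases j <;> simp_all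
  · ext x
    simp [Fin.exists_fin_succ, eq_comm]
  · intro i j
    fin_cases i <;> fin_cases j <;> simp [C3, T.irrefl, T.rel_asymm, *]

lemma exists_cyclic_of_isoOn_C3 {A : Finset (Fin n)} (h : IsoOn C3 T A) :
    ∃ a b c, T.rel a b ∧ T.rel b c ∧ T.rel c a ∧ A = {a, b, c} := by
  obtain ⟨f, -, rfl, hf⟩ := h
  refine ⟨f 0, f 1, f 2, (hf 0 1).symm, (hf 1 2).symm, (hf 2 0).symm, ?_⟩
  ext x
  simp [Fin.exists_fin_succ, eq_comm]

lemma cyclicTriples_filter_eq {a b c : Fin n} (hab : T.rel a b) (hbc : T.rel b c)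
    (hca : T.rel c a) :
    {t ∈ T.cyclicTriples | {t.1, t.2.1, t.2.2} = ({a, b, c} : Finset (Fin n))} =
      {(a, b, c), (b, c, a), (c, a, b)} := by
  have := T.rel_asymm hab
  have := T.rel_asymm hbc
  have := T.rel_asymm hca
  ext ⟨x, y, z⟩
  simp only [cyclicTriples, mem_filter, mem_univ, true_and, mem_insert, mem_singleton,
    Prod.mk.injEq]
  constructor
  · rintro ⟨⟨hxy, hyz, hzx⟩, hset⟩
    have hx : x ∈ ({a, b, c} : Finset (Fin n)) := hset ▸ by simp
    have hy : y ∈ ({a, b, c} : Finset (Fin n)) := hset ▸ by simp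
    have hz : z ∈ ({a, b, c} : Finset (Fin n)) := hset ▸ by simp
    simp only [mem_insert, mem_singleton] at hx hy hz
    rcases hx with rfl | rfl | rfl <;> rcases hy with rfl | rfl | rfl <;>
      rcases hz with rfl | rfl | rfl <;> simp_all [T.irrefl]
  · rintro (⟨rfl, rfl, rfl⟩ | ⟨rfl, rfl, rfl⟩ | ⟨rfl, rfl, rfl⟩) <;>
      refine ⟨by simp [*], ?_⟩ <;> ext <;> simp <;> tauto

lemma card_cyclicTriples : #T.cyclicTriples = 3 * copyCount C3 T := by
  classical
  rw [copyCount, mul_comm,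
    card_eq_sum_card_fiberwise (f := fun t => ({t.1, t.2.1, t.2.2} : Finset (Fin n)))]
  · rw [← smul_eq_mul, ← sum_const]
    refine sum_congr rfl fun A hA => ?_
    obtain ⟨a, b, c, hab, hbc, hca, rfl⟩ := T.exists_cyclic_of_isoOn_C3 (mem_filter.1 hA).2
    have := T.ne_of_rel hab
    have := T.ne_of_rel hbc
    have := T.ne_of_rel hca
    rw [T.cyclicTriples_filter_eq hab hbc hca, card_insert_of_notMem, card_pair] <;>
      simp [*, Ne.symm]
  · rintro ⟨a, b, c⟩ h
    simp only [cyclicTriples, coe_filter, mem_univ, true_and] at h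
    obtain ⟨hab, hbc, hca⟩ := h
    have := T.ne_of_rel hab
    have := T.ne_of_rel hbc
    have := T.ne_of_rel hca
    refine mem_filter.2
      ⟨mem_powersetCard.2 ⟨subset_univ _, ?_⟩, T.isoOn_C3_of_cyclic hab hbc hca⟩
    rw [card_insert_of_notMem, card_pair] <;> simp [*, Ne.symm]

lemma abs_density_C3_sub_le (hn : 3 ≤ n) :
    |density C3 T - 1 / 4| ≤
      3 * (1 / (n : ℝ) ^ 2 * ∑ p ∈ T.arcs, |(Ccount T p.1 p.2 : ℝ) / (n - 2) - 1 / 4|) := by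
  have hn' : (3 : ℝ) ≤ n := by exact_mod_cast hn
  have h1 : (n : ℝ) - 1 ≠ 0 := by linarith
  have h2 : (n : ℝ) - 2 ≠ 0 := by linarith
  have hcoeff_pos : 0 < 2 / ((n : ℝ) * (n - 1)) := by
    exact div_pos two_pos (by nlinarith)
  have hsum : ∑ p ∈ T.arcs, ((Ccount T p.1 p.2 : ℝ) / (n - 2) - 1 / 4) =
      3 * copyCount C3 T / (n - 2) - n * (n - 1) / 8 := by
    rw [sum_sub_distrib, ← sum_div, sum_const, nsmul_eq_mul, card_arcs, Nat.cast_choose_two]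
    rw_mod_cast [T.sum_arcs_Ccount, T.card_cyclicTriples]
    push_cast
    ring
  have hdensity : density C3 T - 1 / 4 =
      2 / (n * (n - 1)) * ∑ p ∈ T.arcs, ((Ccount T p.1 p.2 : ℝ) / (n - 2) - 1 / 4) := by
    rw [hsum, density, Nat.cast_choose_three]
    field_simp
    ring
  have hcoeff : 2 / ((n : ℝ) * (n - 1)) ≤ 3 * (1 / n ^ 2) := by
    rw [div_le_iff₀ (by nlinarith)]
    field_simp
    nlinarith
  calc |density C3 T - 1 / 4|
      = 2 / (n * (n - 1)) * |∑ p ∈ T.arcs, ((Ccount T p.1 p.2 : ℝ) / (n - 2) - 1 / 4)| := by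
        rw [hdensity, abs_mul, abs_of_pos hcoeff_pos]
    _ ≤ 2 / (n * (n - 1)) * ∑ p ∈ T.arcs, |(Ccount T p.1 p.2 : ℝ) / (n - 2) - 1 / 4| :=
        mul_le_mul_of_nonneg_left (abs_sum_le_sum_abs _ _) hcoeff_pos.le
    _ ≤ 3 * (1 / n ^ 2) * ∑ p ∈ T.arcs, |(Ccount T p.1 p.2 : ℝ) / (n - 2) - 1 / 4| :=
        mul_le_mul_of_nonneg_right hcoeff (sum_nonneg fun _ _ => abs_nonneg _)
    _ = _ := mul_assoc _ _ _

end Tournament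

/-- if `(1/n_j²) · Σ_{arcs (u,v)} |C(u,v)/(n_j-2) - 1/4| → 0`, then
`c₃(T_j)/binomial(n_j,3) → 1/4`. -/
theorem c3_density_of_C_concentration (nn : ℕ → ℕ) (T : ∀ j, Tournament (nn j))
    (hn : Filter.Tendsto nn Filter.atTop Filter.atTop)
    (h : Filter.Tendsto (fun j => (1 / (nn j : ℝ) ^ 2) * ∑ u, ∑ v, if (T j).rel u v then |(Ccount (T j) u v : ℝ) / ((nn j : ℝ) - 2) - 1 / 4| else 0)
      Filter.atTop (nhds 0)) :
    Filter.Tendsto (fun j => (copyCount C3 (T j) : ℝ) / ((nn j).choose 3 : ℝ))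
      Filter.atTop (nhds (1 / 4)) := by
  refine tendsto_sub_nhds_zero_iff.1
    (squeeze_zero_norm' ?_ (by simpa only [mul_zero] using h.const_mul 3))
  filter_upwards [hn.eventually_ge_atTop 3] with j hj
  simpa only [Real.norm_eq_abs, density, Tournament.sum_arcs] using (T j).abs_density_C3_sub_le hj
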